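/- arXiv:2510.02199 — 2 statements merged into one kernel-verified Lean document; each statement's English description precedes it below -/
import Mathlib

section
/- Every maximal co-interval subgraph H of a graph G equals G^σ for some ordering σ of the vertices of G extending an Olariu-type ordering of V(H). -/
def IsIntervalGraph {V : Type*} (G : SimpleGraph V) : Prop :=
  ∃ a b : V → ℝ, (∀ v, a v ≤ b v) ∧
    ∀ u v : V, u ≠ v →
      (G.Adj u v ↔ (Set.Icc (a u) (b u) ∩ Set.Icc (a v) (b v)).Nonempty)

def IsCoIntervalGraph {V : Type*} (G : SimpleGraph V) : Prop :=
  IsIntervalGraph Gᶜ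

/-- `VSig G σ i` is the set `V^σ_i`: the common neighbourhood of `σ 0, …, σ i`. -/
def VSig {V : Type*} (G : SimpleGraph V) {n : ℕ} (σ : Fin n ≃ V) (i : Fin n) : Set V :=
  ⋂ j ∈ Finset.Iic i, G.neighborSet (σ j)

/-- The σ-subgraph `G^σ`: its edges are those `σ i -- w` with `w ∈ V^σ_i`. -/
def sigmaSubgraph {V : Type*} (G : SimpleGraph V) {n : ℕ} (σ : Fin n ≃ V) :
    SimpleGraph V where
  Adj a b := (∃ i, a = σ i ∧ b ∈ VSig G σ i) ∨ (∃ i, b = σ i ∧ a ∈ VSig G σ i)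
  symm := by
    constructor
    intro a b h
    rcases h with h | h
    · exact Or.inr h
    · exact Or.inl h
  loopless := by
    constructor
    intro a h
    have key : ∀ i : Fin n, a = σ i → a ∈ VSig G σ i → False := by
      intro i ha hm
      have : a ∈ G.neighborSet (σ i) :=
        Set.mem_iInter₂.mp hm i (Finset.mem_Iic.mpr le_rfl)
      rw [← ha] at this
      exact G.irrefl this
    rcases h with ⟨i, ha, hm⟩ | ⟨i, ha, hm⟩ <;> exact key i ha hm

lemma mem_VSig_iff {V : Type*} (G : SimpleGraph V) {n : ℕ} (σ : Fin n ≃ V) (i : Fin n)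
    (v : V) : v ∈ VSig G σ i ↔ ∀ j : Fin n, j ≤ i → G.Adj (σ j) v := by
  simp [VSig, SimpleGraph.mem_neighborSet]

lemma VSig_antitone {V : Type*} (G : SimpleGraph V) {n : ℕ} (σ : Fin n ≃ V) {i j : Fin n}
    (h : i ≤ j) : VSig G σ j ⊆ VSig G σ i := by
  intro v hv
  rw [mem_VSig_iff] at hv ⊢
  exact fun k hk => hv k (hk.trans h)

lemma sigmaSubgraph_le {V : Type*} (G : SimpleGraph V) {n : ℕ} (σ : Fin n ≃ V) :
    sigmaSubgraph G σ ≤ G := by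
  intro u v h
  rcases h with ⟨i, rfl, hm⟩ | ⟨i, rfl, hm⟩
  · exact (mem_VSig_iff G σ i v).mp hm i le_rfl
  · exact ((mem_VSig_iff G σ i u).mp hm i le_rfl).symm

lemma adj_sigmaSubgraph_iff {V : Type*} (G : SimpleGraph V) {n : ℕ} (σ : Fin n ≃ V)
    {u v : V} (h : σ.symm u < σ.symm v) :
    (sigmaSubgraph G σ).Adj u v ↔ v ∈ VSig G σ (σ.symm u) := by
  constructor
  · rintro (⟨i, hu, hm⟩ | ⟨i, hv, hm⟩)
    · have : i = σ.symm u := by rw [hu]; simp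
      rwa [← this]
    · exfalso
      have hi : i = σ.symm v := by rw [hv]; simp
      have := (mem_VSig_iff G σ i u).mp hm (σ.symm u) (by rw [hi]; exact h.le)
      simp at this
  · intro hm
    exact Or.inl ⟨σ.symm u, by simp, hm⟩

lemma downward_closed_mem_iff {n : ℕ} (S : Finset (Fin n))
    (hdc : ∀ i j : Fin n, i ≤ j → j ∈ S → i ∈ S) (i : Fin n) :
    i ∈ S ↔ (i : ℕ) < S.card := by
  constructor
  · intro hi
    have hsub : Finset.Iic i ⊆ S := fun j hj => hdc j i (Finset.mem_Iic.mp hj) hi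
    have hc := Finset.card_le_card hsub
    rw [Fin.card_Iic] at hc
    omega
  · intro h
    by_contra hi
    have hsub : S ⊆ Finset.Iio i := by
      intro j hj
      rw [Finset.mem_Iio]
      by_contra hji
      exact hi (hdc i j (le_of_not_gt hji) hj)
    have hc := Finset.card_le_card hsub
    rw [Fin.card_Iio] at hc
    omega

lemma sigmaSubgraph_coInterval {V : Type*} [Fintype V] (G : SimpleGraph V) {n : ℕ}
    (σ : Fin n ≃ V) : IsCoIntervalGraph (sigmaSubgraph G σ) := by
  classical
  set A := sigmaSubgraph G σ with hA
  -- the set of indices below τ v whose vertex stays adjacent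
  set S : V → Finset (Fin n) := fun v =>
    Finset.filter (fun i => i < σ.symm v ∧ v ∈ VSig G σ i) Finset.univ with hS
  have hSdc : ∀ v, ∀ i j : Fin n, i ≤ j → j ∈ S v → i ∈ S v := by
    intro v i j hij hj
    rw [hS, Finset.mem_filter] at hj ⊢
    exact ⟨Finset.mem_univ _, lt_of_le_of_lt hij hj.2.1, VSig_antitone G σ hij hj.2.2⟩
  have hSmem : ∀ v, ∀ i : Fin n, i ∈ S v ↔ (i : ℕ) < (S v).card :=
    fun v => downward_closed_mem_iff (S v) (hSdc v)
  have hScard : ∀ v, (S v).card ≤ (σ.symm v : ℕ) := by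
    intro v
    have : S v ⊆ Finset.Iio (σ.symm v) := by
      intro i hi
      rw [hS, Finset.mem_filter] at hi
      exact Finset.mem_Iio.mpr hi.2.1
    have := Finset.card_le_card this
    rwa [Fin.card_Iio] at this
  refine ⟨fun v => ((S v).card : ℝ), fun v => ((σ.symm v : ℕ) : ℝ), ?_, ?_⟩
  · intro v
    show ((S v).card : ℝ) ≤ ((σ.symm v : ℕ) : ℝ)
    exact_mod_cast hScard v
  · intro u v huv
    -- key computation, symmetric in u,v; wlog τ u < τ v
    have key : ∀ u v : V, σ.symm u < σ.symm v →
        (Aᶜ.Adj u v ↔ (Set.Icc (((S u).card : ℝ)) ((σ.symm u : ℕ) : ℝ) ∩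
          Set.Icc (((S v).card : ℝ)) ((σ.symm v : ℕ) : ℝ)).Nonempty) := by
      intro u v hlt
      have hne : u ≠ v := fun h => by rw [h] at hlt; exact lt_irrefl _ hlt
      have h1 : Aᶜ.Adj u v ↔ ¬ A.Adj u v := by
        simp [SimpleGraph.compl_adj, hne]
      have h2 : A.Adj u v ↔ (σ.symm u : ℕ) < (S v).card := by
        rw [hA, adj_sigmaSubgraph_iff G σ hlt, ← hSmem v (σ.symm u)]
        rw [hS, Finset.mem_filter]
        simp [hlt]
      rw [h1, h2, Set.Icc_inter_Icc, Set.nonempty_Icc, not_lt]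
      have hu := hScard u
      have hv := hScard v
      constructor
      · intro h
        have h1' : ((S u).card : ℝ) ≤ ((σ.symm u : ℕ) : ℝ) := by exact_mod_cast hu
        have h2' : ((S v).card : ℝ) ≤ ((σ.symm u : ℕ) : ℝ) := by exact_mod_cast h
        have h3' : ((σ.symm u : ℕ) : ℝ) ≤ ((σ.symm v : ℕ) : ℝ) := by
          exact_mod_cast hlt.le
        exact le_trans (max_le h1' h2') (le_min le_rfl h3')
      · intro h
        have := le_trans (le_max_right (((S u).card : ℝ)) _) (h.trans (min_le_left _ _))
        exact_mod_cast this
    rcases lt_or_gt_of_ne (fun h : σ.symm u = σ.symm v => huv (σ.symm.injective h)) with h | h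
    · exact key u v h
    · rw [SimpleGraph.adj_comm, Set.inter_comm]
      exact key v u h

/-- Every maximal co-interval subgraph `H` of `G` is of the form `G^σ`
for some ordering `σ` of the vertices of `G`. -/
theorem maximal_coInterval_subgraph_eq_sigmaSubgraph {V : Type*} [Fintype V]
    (G H : SimpleGraph V) (hle : H ≤ G) (hco : IsCoIntervalGraph H)
    (hmax : ∀ H' : SimpleGraph V, H' ≤ G → IsCoIntervalGraph H' → H ≤ H' → H = H') :
    ∃ σ : Fin (Fintype.card V) ≃ V, H = sigmaSubgraph G σ := by
  classical
  obtain ⟨a, b, hab, hadj⟩ := hco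
  set n := Fintype.card V
  set e : Fin n ≃ V := (Fintype.equivFin V).symm with he
  set π := Tuple.sort (b ∘ e) with hπ
  set σ : Fin n ≃ V := π.trans e with hσ
  have hmono : Monotone (b ∘ σ) := Tuple.monotone_sort (b ∘ e)
  -- adjacency in H via intervals
  have hHadj : ∀ u v : V, u ≠ v → (H.Adj u v ↔ b u < a v ∨ b v < a u) := by
    intro u v huv
    have h1 := hadj u v huv
    have h2 : Hᶜ.Adj u v ↔ ¬ H.Adj u v := by simp [SimpleGraph.compl_adj, huv]
    rw [h2] at h1
    rw [← not_not (a := H.Adj u v), h1, Set.Icc_inter_Icc, Set.nonempty_Icc, not_le]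
    constructor
    · intro h
      rcases min_lt_iff.mp h with h' | h'
      · rcases lt_max_iff.mp h' with h'' | h''
        · exact absurd h'' (not_lt.mpr (hab u))
        · exact Or.inl h''
      · rcases lt_max_iff.mp h' with h'' | h''
        · exact Or.inr h''
        · exact absurd h'' (not_lt.mpr (hab v))
    · rintro (h | h)
      · exact lt_of_le_of_lt (min_le_left _ _) (lt_of_lt_of_le h (le_max_right _ _))
      · exact lt_of_le_of_lt (min_le_right _ _) (lt_of_lt_of_le h (le_max_left _ _))

  -- Olariu property
  have holariu : ∀ i j k : Fin n, i ≤ j → j < k → H.Adj (σ j) (σ k) → H.Adj (σ i) (σ k) := by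
    intro i j k hij hjk hadjH
    have hjkne : σ j ≠ σ k := fun h => absurd (σ.injective h) (ne_of_lt hjk)
    have hikne : σ i ≠ σ k := fun h =>
      absurd (σ.injective h) (ne_of_lt (lt_of_le_of_lt hij hjk))
    rw [hHadj _ _ hjkne] at hadjH
    rw [hHadj _ _ hikne]
    have hbjk : b (σ j) ≤ b (σ k) := hmono hjk.le
    have hbij : b (σ i) ≤ b (σ j) := hmono hij
    rcases hadjH with h | h
    · exact Or.inl (lt_of_le_of_lt hbij h)
    · exfalso; exact absurd (lt_of_lt_of_le h (le_trans (hab (σ j)) hbjk)) (lt_irrefl _)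
  -- H ≤ sigmaSubgraph G σ
  have hHle : H ≤ sigmaSubgraph G σ := by
    intro u v huv
    have hne : u ≠ v := H.ne_of_adj huv
    have key : ∀ u v : V, σ.symm u < σ.symm v → H.Adj u v → (sigmaSubgraph G σ).Adj u v := by
      intro u v hlt hadjH
      rw [adj_sigmaSubgraph_iff G σ hlt, mem_VSig_iff]
      intro j hj
      have : H.Adj (σ j) (σ (σ.symm v)) := by
        rcases lt_or_eq_of_le hj with h | h
        · exact holariu j (σ.symm u) (σ.symm v) hj hlt (by simpa using hadjH)
        · rw [h]; simpa using hadjH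
      rw [Equiv.apply_symm_apply] at this
      exact hle this
    rcases lt_or_gt_of_ne (fun h : σ.symm u = σ.symm v => hne (σ.symm.injective h)) with h | h
    · exact key u v h huv
    · exact ((sigmaSubgraph G σ).adj_comm _ _).mp (key v u h huv.symm)
  exact ⟨σ, hmax _ (sigmaSubgraph_le G σ) (sigmaSubgraph_coInterval G σ) hHle⟩
end

section
/- For every block graph G, coboxicity(G) ≤ cothdim(G) ≤ 2·coboxicity(G), where coboxicity(G) is the minimum size of a co-interval cover of G and cothdim(G) is the minimum size of a threshold cover of G. -/
/-- A vertex set `B` induces a 2-connected subgraph of `G` (where a single vertex or a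
single edge counts as 2-connected): the induced graph is connected, and removing any
single vertex leaves it connected. -/
def IsTwoConnectedSet {V : Type*} (G : SimpleGraph V) (B : Set V) : Prop :=
  B.Nonempty ∧ (G.induce B).Connected ∧
    ∀ v ∈ B, (B \ {v}).Nonempty → (G.induce (B \ {v})).Connected

/-- A block of `G`: a maximal 2-connected vertex set. -/
def IsBlock {V : Type*} (G : SimpleGraph V) (B : Set V) : Prop :=
  IsTwoConnectedSet G B ∧ ∀ B' : Set V, IsTwoConnectedSet G B' → B ⊆ B' → B = B'

/-- `v` is a cut-vertex of `G`: removing `v` disconnects two vertices that were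
reachable from each other, i.e. it increases the number of connected components. -/
def IsCutVertex {V : Type*} (G : SimpleGraph V) (v : V) : Prop :=
  ∃ (a b : V) (ha : a ≠ v) (hb : b ≠ v), G.Reachable a b ∧
    ¬ (G.induce {x : V | x ≠ v}).Reachable ⟨a, ha⟩ ⟨b, hb⟩

/-- A leaf block: a block containing exactly one cut-vertex of `G`. -/
def IsLeafBlock {V : Type*} (G : SimpleGraph V) (B : Set V) : Prop :=
  IsBlock G B ∧ ∃! v : V, v ∈ B ∧ IsCutVertex G v

/-- An internal block: a block containing at least two cut-vertices of `G`. -/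
def IsInternalBlock {V : Type*} (G : SimpleGraph V) (B : Set V) : Prop :=
  IsBlock G B ∧ ∃ u v : V, u ≠ v ∧ u ∈ B ∧ v ∈ B ∧ IsCutVertex G u ∧ IsCutVertex G v

/-- A near-leaf block: an internal block `Q` such that either all internal-block
neighbours of `Q` meet `Q` in one common cut-vertex (the anchor), or all block
neighbours of `Q` are leaf blocks. -/
def IsNearLeafBlock {V : Type*} (G : SimpleGraph V) (Q : Set V) : Prop :=
  IsInternalBlock G Q ∧
    ((∃ a, a ∈ Q ∧ IsCutVertex G a ∧
        ∀ B : Set V, IsInternalBlock G B → B ≠ Q → (B ∩ Q).Nonempty → a ∈ B) ∨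
      (∀ B : Set V, IsBlock G B → B ≠ Q → (B ∩ Q).Nonempty → IsLeafBlock G B))

/-- A threshold graph, via the forbidden-induced-subgraph characterization:
a graph with no induced `2K₂`, `P₄`, or `C₄`. -/
def IsThresholdGraph {V : Type*} (G : SimpleGraph V) : Prop :=
  (¬ ∃ a b c d : V, a ≠ b ∧ a ≠ c ∧ a ≠ d ∧ b ≠ c ∧ b ≠ d ∧ c ≠ d ∧
    G.Adj a b ∧ G.Adj c d ∧ ¬G.Adj a c ∧ ¬G.Adj a d ∧ ¬G.Adj b c ∧ ¬G.Adj b d) ∧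
  (¬ ∃ a b c d : V, a ≠ b ∧ a ≠ c ∧ a ≠ d ∧ b ≠ c ∧ b ≠ d ∧ c ≠ d ∧
    G.Adj a b ∧ G.Adj b c ∧ G.Adj c d ∧ ¬G.Adj a c ∧ ¬G.Adj a d ∧ ¬G.Adj b d) ∧
  (¬ ∃ a b c d : V, a ≠ b ∧ a ≠ c ∧ a ≠ d ∧ b ≠ c ∧ b ≠ d ∧ c ≠ d ∧
    G.Adj a b ∧ G.Adj b c ∧ G.Adj c d ∧ G.Adj d a ∧ ¬G.Adj a c ∧ ¬G.Adj b d)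

/-- A block graph: every block is a clique. -/
def IsBlockGraph {V : Type*} (G : SimpleGraph V) : Prop :=
  ∀ B : Set V, IsBlock G B → G.IsClique B

/-- `coboxicity G`: the minimum size of a co-interval cover of `G`. -/
noncomputable def coboxicity {V : Type*} (G : SimpleGraph V) : ℕ :=
  sInf {k : ℕ | ∃ f : Fin k → SimpleGraph V,
    (∀ i, f i ≤ G ∧ IsCoIntervalGraph (f i)) ∧
    ∀ u v : V, G.Adj u v → ∃ i, (f i).Adj u v}

/-- `cothdim G`: the minimum size of a threshold cover of `G`. -/
noncomputable def cothdim {V : Type*} (G : SimpleGraph V) : ℕ :=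
  sInf {k : ℕ | ∃ f : Fin k → SimpleGraph V,
    (∀ i, f i ≤ G ∧ IsThresholdGraph (f i)) ∧
    ∀ u v : V, G.Adj u v → ∃ i, (f i).Adj u v}


/- ===================== Auxiliary machinery ===================== -/

section Aux

open SimpleGraph

/-! ### Blocks: every 2-connected set extends to a block, hence spans a clique -/

lemma exists_block_superset {V : Type*} [Fintype V] (G : SimpleGraph V) {S : Set V}
    (hS : IsTwoConnectedSet G S) : ∃ B, IsBlock G B ∧ S ⊆ B := by
  classical
  let 𝒮 : Finset (Finset V) :=
    Finset.univ.filter (fun B => IsTwoConnectedSet G ↑B ∧ S ⊆ ↑B)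
  have hne : 𝒮.Nonempty := by
    refine ⟨(Set.toFinite S).toFinset, ?_⟩
    simp only [𝒮, Finset.mem_filter, Finset.mem_univ, true_and]
    rw [Set.Finite.coe_toFinset]
    exact ⟨hS, subset_rfl⟩
  obtain ⟨B₀, hB₀, hmax⟩ := Finset.exists_max_image 𝒮 Finset.card hne
  simp only [𝒮, Finset.mem_filter, Finset.mem_univ, true_and] at hB₀
  refine ⟨↑B₀, ⟨hB₀.1, ?_⟩, hB₀.2⟩
  intro B' hB' hsub
  have hfin : ((Set.toFinite B').toFinset : Set V) = B' := Set.Finite.coe_toFinset _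
  have hmem : (Set.toFinite B').toFinset ∈ 𝒮 := by
    simp only [𝒮, Finset.mem_filter, Finset.mem_univ, true_and]
    rw [hfin]
    exact ⟨hB', hB₀.2.trans hsub⟩
  have hsub2 : B₀ ⊆ (Set.toFinite B').toFinset := by
    intro x hx
    have : (x : V) ∈ B' := hsub hx
    rwa [← hfin] at this
  have := Finset.eq_of_subset_of_card_le hsub2 (hmax _ hmem)
  rw [← hfin, ← this]

private lemma preconn_root {W : Type*} {H : SimpleGraph W} {r : W}
    (h : ∀ x, H.Reachable x r) : H.Preconnected := fun x y => (h x).trans (h y).symm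

lemma induce_reach {V : Type*} {G : SimpleGraph V} {s : Set V} {x y : V} (hx : x ∈ s) (hy : y ∈ s)
    (h : G.Adj x y) : (G.induce s).Reachable ⟨x, hx⟩ ⟨y, hy⟩ :=
  SimpleGraph.Adj.reachable (by simpa using h)

lemma clique_of_twoConn {V : Type*} [Fintype V] {G : SimpleGraph V} (hG : IsBlockGraph G)
    {S : Set V} (h : IsTwoConnectedSet G S) : G.IsClique S := by
  obtain ⟨B, hB, hSB⟩ := exists_block_superset G h
  exact (hG B hB).subset hSB

lemma conn_path3 {V : Type*} {G : SimpleGraph V} {s : Set V} {p q r : V}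
    (hp : p ∈ s) (hq : q ∈ s) (hr : r ∈ s)
    (hmem : ∀ x ∈ s, x = p ∨ x = q ∨ x = r)
    (h1 : G.Adj p q) (h2 : G.Adj q r) : (G.induce s).Connected := by
  have hne : Nonempty s := ⟨⟨q, hq⟩⟩
  refine SimpleGraph.Connected.mk (preconn_root (r := ⟨q, hq⟩) ?_)
  rintro ⟨x, hx⟩
  rcases hmem x hx with rfl | rfl | rfl
  · exact induce_reach hx hq h1
  · exact SimpleGraph.Reachable.refl _
  · exact induce_reach hx hq h2.symm

lemma conn_path4 {V : Type*} {G : SimpleGraph V} {s : Set V} {p q r t : V}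
    (hp : p ∈ s) (hq : q ∈ s) (hr : r ∈ s) (ht : t ∈ s)
    (hmem : ∀ x ∈ s, x = p ∨ x = q ∨ x = r ∨ x = t)
    (h1 : G.Adj p q) (h2 : G.Adj q r) (h3 : G.Adj r t) : (G.induce s).Connected := by
  have hne : Nonempty s := ⟨⟨q, hq⟩⟩
  refine SimpleGraph.Connected.mk (preconn_root (r := ⟨q, hq⟩) ?_)
  rintro ⟨x, hx⟩
  rcases hmem x hx with rfl | rfl | rfl | rfl
  · exact induce_reach hx hq h1
  · exact SimpleGraph.Reachable.refl _
  · exact induce_reach hx hq h2.symm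
  · exact (induce_reach hx hr h3.symm).trans (induce_reach hr hq h2.symm)

lemma conn_path5 {V : Type*} {G : SimpleGraph V} {s : Set V} {p q r t u : V}
    (hp : p ∈ s) (hq : q ∈ s) (hr : r ∈ s) (ht : t ∈ s) (hu : u ∈ s)
    (hmem : ∀ x ∈ s, x = p ∨ x = q ∨ x = r ∨ x = t ∨ x = u)
    (h1 : G.Adj p q) (h2 : G.Adj q r) (h3 : G.Adj r t) (h4 : G.Adj t u) :
    (G.induce s).Connected := by
  have hne : Nonempty s := ⟨⟨r, hr⟩⟩
  refine SimpleGraph.Connected.mk (preconn_root (r := ⟨r, hr⟩) ?_)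
  rintro ⟨x, hx⟩
  rcases hmem x hx with rfl | rfl | rfl | rfl | rfl
  · exact (induce_reach hx hq h1).trans (induce_reach hq hr h2)
  · exact induce_reach hx hr h2
  · exact SimpleGraph.Reachable.refl _
  · exact induce_reach hx hr h3.symm
  · exact (induce_reach hx ht h4.symm).trans (induce_reach ht hr h3.symm)

lemma twoConn_cycle4 {V : Type*} {G : SimpleGraph V} {a b c d : V}
    (hab : G.Adj a b) (hbc : G.Adj b c) (hcd : G.Adj c d) (hda : G.Adj d a)
    (hac : a ≠ c) (hbd : b ≠ d) : IsTwoConnectedSet G {a, b, c, d} := by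
  have ha : a ∈ ({a, b, c, d} : Set V) := by simp
  have hb : b ∈ ({a, b, c, d} : Set V) := by simp
  have hc : c ∈ ({a, b, c, d} : Set V) := by simp
  have hd : d ∈ ({a, b, c, d} : Set V) := by simp
  refine ⟨⟨a, ha⟩, ?_, ?_⟩
  · exact conn_path4 ha hb hc hd (by intro x hx; simpa using hx) hab hbc hcd
  · intro v hv _
    have hv' : v = a ∨ v = b ∨ v = c ∨ v = d := by simpa using hv
    rcases hv' with rfl | rfl | rfl | rfl
    · refine conn_path3 (p := b) (q := c) (r := d)
        ⟨hb, by simpa using hab.ne'⟩ ⟨hc, by simpa using hac.symm⟩ ⟨hd, by simpa using hda.ne⟩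
        ?_ hbc hcd
      rintro x ⟨hx1, hx2⟩
      simp only [Set.mem_singleton_iff] at hx2
      rcases (by simpa using hx1 : x = v ∨ x = b ∨ x = c ∨ x = d) with rfl | h
      · exact absurd rfl hx2
      · exact h
    · refine conn_path3 (p := c) (q := d) (r := a)
        ⟨hc, by simpa using hbc.ne'⟩ ⟨hd, by simpa using hbd.symm⟩ ⟨ha, by simpa using hab.ne⟩
        ?_ hcd hda
      rintro x ⟨hx1, hx2⟩
      simp only [Set.mem_singleton_iff] at hx2
      rcases (by simpa using hx1 : x = a ∨ x = v ∨ x = c ∨ x = d) with h | rfl | h | h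
      · exact Or.inr (Or.inr h)
      · exact absurd rfl hx2
      · exact Or.inl h
      · exact Or.inr (Or.inl h)
    · refine conn_path3 (p := d) (q := a) (r := b)
        ⟨hd, by simpa using hcd.ne'⟩ ⟨ha, by simpa using hac⟩ ⟨hb, by simpa using hbc.ne⟩
        ?_ hda hab
      rintro x ⟨hx1, hx2⟩
      simp only [Set.mem_singleton_iff] at hx2
      rcases (by simpa using hx1 : x = a ∨ x = b ∨ x = v ∨ x = d) with h | h | rfl | h
      · exact Or.inr (Or.inl h)
      · exact Or.inr (Or.inr h)
      · exact absurd rfl hx2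
      · exact Or.inl h
    · refine conn_path3 (p := a) (q := b) (r := c)
        ⟨ha, by simpa using hda.ne'⟩ ⟨hb, by simpa using hbd⟩ ⟨hc, by simpa using hcd.ne⟩
        ?_ hab hbc
      rintro x ⟨hx1, hx2⟩
      simp only [Set.mem_singleton_iff] at hx2
      rcases (by simpa using hx1 : x = a ∨ x = b ∨ x = c ∨ x = v) with h | h | h | rfl
      · exact Or.inl h
      · exact Or.inr (Or.inl h)
      · exact Or.inr (Or.inr h)
      · exact absurd rfl hx2

lemma twoConn_cycle5 {V : Type*} {G : SimpleGraph V} {a b c d e : V}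
    (hab : G.Adj a b) (hbc : G.Adj b c) (hcd : G.Adj c d) (hde : G.Adj d e) (hea : G.Adj e a)
    (hac : a ≠ c) (had : a ≠ d) (hbd : b ≠ d) (hbe : b ≠ e) (hce : c ≠ e) :
    IsTwoConnectedSet G {a, b, c, d, e} := by
  have ha : a ∈ ({a, b, c, d, e} : Set V) := by simp
  have hb : b ∈ ({a, b, c, d, e} : Set V) := by simp
  have hc : c ∈ ({a, b, c, d, e} : Set V) := by simp
  have hd : d ∈ ({a, b, c, d, e} : Set V) := by simp
  have he : e ∈ ({a, b, c, d, e} : Set V) := by simp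
  refine ⟨⟨a, ha⟩, ?_, ?_⟩
  · exact conn_path5 ha hb hc hd he (by intro x hx; simpa using hx) hab hbc hcd hde
  · intro v hv _
    have hv' : v = a ∨ v = b ∨ v = c ∨ v = d ∨ v = e := by simpa using hv
    have hmem : ∀ w : V, w ≠ v → w ∈ ({a, b, c, d, e} : Set V) →
        w ∈ ({a, b, c, d, e} : Set V) \ {v} := fun w hw hmemw => ⟨hmemw, by simpa using hw⟩
    rcases hv' with rfl | rfl | rfl | rfl | rfl
    · refine conn_path4 (p := b) (q := c) (r := d) (t := e)
        (hmem b hab.ne' hb) (hmem c hac.symm hc) (hmem d had.symm hd) (hmem e hea.ne he)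
        ?_ hbc hcd hde
      rintro x ⟨hx1, hx2⟩
      simp only [Set.mem_singleton_iff] at hx2
      rcases (by simpa using hx1 : x = v ∨ x = b ∨ x = c ∨ x = d ∨ x = e) with rfl | h
      · exact absurd rfl hx2
      · exact h
    · refine conn_path4 (p := c) (q := d) (r := e) (t := a)
        (hmem c hbc.ne' hc) (hmem d hbd.symm hd) (hmem e hbe.symm he) (hmem a hab.ne ha)
        ?_ hcd hde hea
      rintro x ⟨hx1, hx2⟩
      simp only [Set.mem_singleton_iff] at hx2
      rcases (by simpa using hx1 : x = a ∨ x = v ∨ x = c ∨ x = d ∨ x = e) with h | rfl | h | h | h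
      · exact Or.inr (Or.inr (Or.inr h))
      · exact absurd rfl hx2
      · exact Or.inl h
      · exact Or.inr (Or.inl h)
      · exact Or.inr (Or.inr (Or.inl h))
    · refine conn_path4 (p := d) (q := e) (r := a) (t := b)
        (hmem d hcd.ne' hd) (hmem e hce.symm he) (hmem a hac ha) (hmem b hbc.ne hb)
        ?_ hde hea hab
      rintro x ⟨hx1, hx2⟩
      simp only [Set.mem_singleton_iff] at hx2
      rcases (by simpa using hx1 : x = a ∨ x = b ∨ x = v ∨ x = d ∨ x = e) with h | h | rfl | h | h
      · exact Or.inr (Or.inr (Or.inl h))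
      · exact Or.inr (Or.inr (Or.inr h))
      · exact absurd rfl hx2
      · exact Or.inl h
      · exact Or.inr (Or.inl h)
    · refine conn_path4 (p := e) (q := a) (r := b) (t := c)
        (hmem e hde.ne' he) (hmem a had ha) (hmem b hbd hb) (hmem c hcd.ne hc)
        ?_ hea hab hbc
      rintro x ⟨hx1, hx2⟩
      simp only [Set.mem_singleton_iff] at hx2
      rcases (by simpa using hx1 : x = a ∨ x = b ∨ x = c ∨ x = v ∨ x = e) with h | h | h | rfl | h
      · exact Or.inr (Or.inl h)
      · exact Or.inr (Or.inr (Or.inl h))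
      · exact Or.inr (Or.inr (Or.inr h))
      · exact absurd rfl hx2
      · exact Or.inl h
    · refine conn_path4 (p := a) (q := b) (r := c) (t := d)
        (hmem a hea.ne' ha) (hmem b hbe hb) (hmem c hce hc) (hmem d hde.ne hd)
        ?_ hab hbc hcd
      rintro x ⟨hx1, hx2⟩
      simp only [Set.mem_singleton_iff] at hx2
      rcases (by simpa using hx1 : x = a ∨ x = b ∨ x = c ∨ x = d ∨ x = v) with h | h | h | h | rfl
      · exact Or.inl h
      · exact Or.inr (Or.inl h)
      · exact Or.inr (Or.inr (Or.inl h))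
      · exact Or.inr (Or.inr (Or.inr h))
      · exact absurd rfl hx2

lemma clique_of_cycle4 {V : Type*} [Fintype V] {G : SimpleGraph V} (hG : IsBlockGraph G)
    {a b c d : V} (hab : G.Adj a b) (hbc : G.Adj b c) (hcd : G.Adj c d) (hda : G.Adj d a)
    (hac : a ≠ c) (hbd : b ≠ d) : G.IsClique {a, b, c, d} :=
  clique_of_twoConn hG (twoConn_cycle4 hab hbc hcd hda hac hbd)

lemma clique_of_cycle5 {V : Type*} [Fintype V] {G : SimpleGraph V} (hG : IsBlockGraph G)
    {a b c d e : V} (hab : G.Adj a b) (hbc : G.Adj b c) (hcd : G.Adj c d) (hde : G.Adj d e)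
    (hea : G.Adj e a) (hac : a ≠ c) (had : a ≠ d) (hbd : b ≠ d) (hbe : b ≠ e) (hce : c ≠ e) :
    G.IsClique {a, b, c, d, e} :=
  clique_of_twoConn hG (twoConn_cycle5 hab hbc hcd hde hea hac had hbd hbe hce)

/-! ### The clique-plus-star graph -/

def shapeGraph {V : Type*} (G : SimpleGraph V) (v : V) (K : Set V) : SimpleGraph V where
  Adj x y := G.Adj x y ∧ (x = v ∨ y = v ∨ (x ∈ K ∧ y ∈ K))
  symm := ⟨by rintro x y ⟨h1, h2⟩; exact ⟨h1.symm, by tauto⟩⟩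
  loopless := ⟨by rintro x ⟨h, -⟩; exact G.irrefl h⟩

lemma shapeGraph_adj {V : Type*} (G : SimpleGraph V) (v : V) (K : Set V) (x y : V) :
    (shapeGraph G v K).Adj x y ↔ G.Adj x y ∧ (x = v ∨ y = v ∨ (x ∈ K ∧ y ∈ K)) := Iff.rfl

lemma shapeGraph_le {V : Type*} (G : SimpleGraph V) (v : V) (K : Set V) :
    shapeGraph G v K ≤ G := fun _ _ h => h.1

lemma shapeGraph_threshold {V : Type*} (G : SimpleGraph V) {v : V} {K : Set V}
    (hK : G.IsClique K) (hv : v ∈ K) : IsThresholdGraph (shapeGraph G v K) := by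
  have hadj : ∀ x y : V, x ∈ K → y ∈ K → x ≠ y → (shapeGraph G v K).Adj x y :=
    fun x y hx hy hne => ⟨hK hx hy hne, Or.inr (Or.inr ⟨hx, hy⟩)⟩
  refine ⟨?_, ?_, ?_⟩
  · rintro ⟨a, b, c, d, hab, hac, had, hbc, hbd, hcd, e1, e2, n1, n2, n3, n4⟩
    rcases e1.2 with rfl | rfl | ⟨haK, hbK⟩ <;> rcases e2.2 with h2 | h2 | ⟨hcK, hdK⟩
    · exact hac h2.symm
    · exact had h2.symm
    · exact n1 (hadj _ _ hv hcK hac)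
    · exact hbc h2.symm
    · exact hbd h2.symm
    · exact n3 (hadj _ _ hv hcK hbc)
    · exact n1 (hadj _ _ haK (h2 ▸ hv) hac)
    · exact n2 (hadj _ _ haK (h2 ▸ hv) had)
    · exact n1 (hadj _ _ haK hcK hac)
  · rintro ⟨a, b, c, d, hab, hac, had, hbc, hbd, hcd, e1, e2, e3, n1, n2, n3⟩
    rcases e1.2 with rfl | rfl | ⟨haK, hbK⟩ <;> rcases e3.2 with h2 | h2 | ⟨hcK, hdK⟩
    · exact hac h2.symm
    · exact had h2.symm
    · rcases e2.2 with h3 | h3 | ⟨hbK, hcK⟩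
      · exact hab h3.symm
      · exact hac h3.symm
      · exact n3 (hadj _ _ hbK hdK hbd)
    · exact hbc h2.symm
    · exact hbd h2.symm
    · exact n3 (hadj _ _ hv hdK hbd)
    · exact n1 (hadj _ _ haK (h2 ▸ hv) hac)
    · exact n2 (hadj _ _ haK (h2 ▸ hv) had)
    · exact n2 (hadj _ _ haK hdK had)
  · rintro ⟨a, b, c, d, hab, hac, had, hbc, hbd, hcd, e1, e2, e3, e4, n1, n2⟩
    rcases e1.2 with rfl | rfl | ⟨haK, hbK⟩ <;> rcases e3.2 with h2 | h2 | ⟨hcK, hdK⟩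
    · exact hac h2.symm
    · exact had h2.symm
    · rcases e2.2 with h3 | h3 | ⟨hbK, hcK⟩
      · exact hab h3.symm
      · exact hac h3.symm
      · exact n2 (hadj _ _ hbK hdK hbd)
    · exact hbc h2.symm
    · exact hbd h2.symm
    · exact n2 (hadj _ _ hv hdK hbd)
    · exact n1 (hadj _ _ haK (h2 ▸ hv) hac)
    · rcases e2.2 with h3 | h3 | ⟨hbK, hcK⟩
      · exact hbd (h3.trans h2.symm)
      · exact hcd (h3.trans h2.symm)
      · exact n1 (hadj _ _ haK hcK hac)
    · exact n1 (hadj _ _ haK hcK hac)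

lemma icc_nonempty_iff {au bu aw bw : ℝ} :
    (Set.Icc au bu ∩ Set.Icc aw bw).Nonempty ↔ au ≤ bu ∧ au ≤ bw ∧ aw ≤ bu ∧ aw ≤ bw := by
  rw [Set.Icc_inter_Icc, Set.nonempty_Icc, sup_le_iff, le_inf_iff, le_inf_iff]
  tauto

lemma shapeGraph_cointerval [Fintype V] (G : SimpleGraph V) {v : V} {K : Set V}
    (hK : G.IsClique K) (hv : v ∈ K) : IsCoIntervalGraph (shapeGraph G v K) := by
  classical
  have hnpos : 0 < Fintype.card V := Fintype.card_pos_iff.mpr ⟨v⟩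
  set e := Fintype.equivFin V with he
  set p : V → ℝ := fun w => 1 + (e w : ℝ) / (Fintype.card V) with hp
  have hp1 : ∀ x, (1:ℝ) ≤ p x := by
    intro x
    have : (0:ℝ) ≤ (e x : ℝ) / (Fintype.card V) := by positivity
    simp only [hp]; linarith
  have hp2 : ∀ x, p x < 2 := by
    intro x
    have h1 : ((e x : ℕ) : ℝ) < Fintype.card V := by exact_mod_cast (e x).2
    have h2 : (e x : ℝ) / (Fintype.card V) < 1 :=
      (div_lt_one (by exact_mod_cast hnpos)).mpr h1
    simp only [hp]; linarith
  have hpinj : Function.Injective p := by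
    intro x y hxy
    simp only [hp] at hxy
    have hne : ((Fintype.card V : ℕ):ℝ) ≠ 0 := by exact_mod_cast hnpos.ne'
    have h3 : ((e x : ℕ) : ℝ) = ((e y : ℕ) : ℝ) := by
      field_simp at hxy
      have h5 : (Fintype.card V : ℝ) + ((e x : ℕ) : ℝ) = (Fintype.card V : ℝ) + ((e y : ℕ) : ℝ) := by
        exact_mod_cast hxy
      exact add_left_cancel h5
    have h4 : (e x : ℕ) = (e y : ℕ) := by exact_mod_cast h3
    exact e.injective (Fin.ext h4)
  set fA : V → ℝ := fun w => if w = v then 4 else if w ∈ K then p w else 0 with hfA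
  set fB : V → ℝ := fun w => if w = v then 5 else if w ∈ K then p w
    else if G.Adj v w then 2 else 5 with hfB
  have hv4 : fA v = 4 := by simp [hfA]
  have hv5 : fB v = 5 := by simp [hfB]
  have hKA : ∀ x, x ≠ v → x ∈ K → fA x = p x := by intro x h1 h2; simp [hfA, h1, h2]
  have hKB : ∀ x, x ≠ v → x ∈ K → fB x = p x := by intro x h1 h2; simp [hfB, h1, h2]
  have hCA : ∀ x, x ≠ v → x ∉ K → fA x = 0 := by intro x h1 h2; simp [hfA, h1, h2]
  have hCB : ∀ x, x ≠ v → x ∉ K → G.Adj v x → fB x = 2 := by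
    intro x h1 h2 h3; simp [hfB, h1, h2, h3]
  have hDB : ∀ x, x ≠ v → x ∉ K → ¬G.Adj v x → fB x = 5 := by
    intro x h1 h2 h3; simp [hfB, h1, h2, h3]
  have hclass : ∀ x : V, x = v ∨ (x ≠ v ∧ x ∈ K) ∨ (x ≠ v ∧ x ∉ K ∧ G.Adj v x) ∨
      (x ≠ v ∧ x ∉ K ∧ ¬G.Adj v x) := by
    intro x
    by_cases h1 : x = v
    · exact Or.inl h1
    by_cases h2 : x ∈ K
    · exact Or.inr (Or.inl ⟨h1, h2⟩)
    by_cases h3 : G.Adj v x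
    · exact Or.inr (Or.inr (Or.inl ⟨h1, h2, h3⟩))
    · exact Or.inr (Or.inr (Or.inr ⟨h1, h2, h3⟩))
  refine ⟨fA, fB, ?_, ?_⟩
  · intro w
    rcases hclass w with h | ⟨h1, h2⟩ | ⟨h1, h2, h3⟩ | ⟨h1, h2, h3⟩
    · rw [h, hv4, hv5]; norm_num
    · rw [hKA w h1 h2, hKB w h1 h2]
    · rw [hCA w h1 h2, hCB w h1 h2 h3]; norm_num
    · rw [hCA w h1 h2, hDB w h1 h2 h3]; norm_num
  · intro u w hne
    rw [SimpleGraph.compl_adj]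
    simp only [ne_eq, hne, not_false_iff, true_and]
    rw [shapeGraph_adj, icc_nonempty_iff]
    rcases hclass u with hu | ⟨hu, huK⟩ | ⟨hu, huK, hua⟩ | ⟨hu, huK, hua⟩ <;>
      rcases hclass w with hw | ⟨hw, hwK⟩ | ⟨hw, hwK, hwa⟩ | ⟨hw, hwK, hwa⟩
    · exact absurd (hu.trans hw.symm) hne
    · have hvw : v ≠ w := by rw [hu] at hne; exact hne
      rw [hu, hv4, hv5, hKA w hw hwK, hKB w hw hwK]
      constructor
      · intro h; exact absurd ⟨hK hv hwK hvw, Or.inl rfl⟩ h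
      · rintro ⟨-, h2, -⟩; exact absurd h2 (by linarith [hp2 w])
    · rw [hu, hv4, hv5, hCA w hw hwK, hCB w hw hwK hwa]
      constructor
      · intro h; exact absurd ⟨hwa, Or.inl rfl⟩ h
      · rintro ⟨-, h2, -⟩; exact absurd h2 (by norm_num)
    · rw [hu, hv4, hv5, hCA w hw hwK, hDB w hw hwK hwa]
      constructor
      · intro h; norm_num
      · rintro - ⟨hA, -⟩; exact hwa hA
    · have hvu : u ≠ v := hu
      rw [hw, hv4, hv5, hKA u hu huK, hKB u hu huK]
      constructor
      · intro h; exact absurd ⟨hK huK hv hvu, Or.inr (Or.inl rfl)⟩ h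
      · rintro ⟨-, -, h3, -⟩; exact absurd h3 (by linarith [hp2 u])
    · rw [hKA u hu huK, hKB u hu huK, hKA w hw hwK, hKB w hw hwK]
      constructor
      · intro h; exact absurd ⟨hK huK hwK hne, Or.inr (Or.inr ⟨huK, hwK⟩)⟩ h
      · rintro ⟨-, h2, h3, -⟩; exact absurd (hpinj (le_antisymm h2 h3)) hne
    · rw [hKA u hu huK, hKB u hu huK, hCA w hw hwK, hCB w hw hwK hwa]
      constructor
      · intro h
        exact ⟨le_refl _, by linarith [hp2 u], by linarith [hp1 u], by norm_num⟩
      · rintro - ⟨-, h2 | h2 | ⟨-, hwK2⟩⟩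
        · exact hu h2
        · exact hw h2
        · exact hwK hwK2
    · rw [hKA u hu huK, hKB u hu huK, hCA w hw hwK, hDB w hw hwK hwa]
      constructor
      · intro h
        exact ⟨le_refl _, by linarith [hp2 u], by linarith [hp1 u], by norm_num⟩
      · rintro - ⟨-, h2 | h2 | ⟨-, hwK2⟩⟩
        · exact hu h2
        · exact hw h2
        · exact hwK hwK2
    · rw [hw, hv4, hv5, hCA u hu huK, hCB u hu huK hua]
      constructor
      · intro h; exact absurd ⟨hua.symm, Or.inr (Or.inl rfl)⟩ h
      · rintro ⟨-, -, h3, -⟩; exact absurd h3 (by norm_num)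
    · rw [hCA u hu huK, hCB u hu huK hua, hKA w hw hwK, hKB w hw hwK]
      constructor
      · intro h
        exact ⟨by norm_num, by linarith [hp1 w], by linarith [hp2 w], le_refl _⟩
      · rintro - ⟨-, h2 | h2 | ⟨huK2, -⟩⟩
        · exact hu h2
        · exact hw h2
        · exact huK huK2
    · rw [hCA u hu huK, hCB u hu huK hua, hCA w hw hwK, hCB w hw hwK hwa]
      constructor
      · intro h; norm_num
      · rintro - ⟨-, h2 | h2 | ⟨huK2, -⟩⟩
        · exact hu h2
        · exact hw h2
        · exact huK huK2
    · rw [hCA u hu huK, hCB u hu huK hua, hCA w hw hwK, hDB w hw hwK hwa]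
      constructor
      · intro h; norm_num
      · rintro - ⟨-, h2 | h2 | ⟨huK2, -⟩⟩
        · exact hu h2
        · exact hw h2
        · exact huK huK2
    · rw [hw, hv4, hv5, hCA u hu huK, hDB u hu huK hua]
      constructor
      · intro h; norm_num
      · rintro - ⟨hA, -⟩; exact hua hA.symm
    · rw [hCA u hu huK, hDB u hu huK hua, hKA w hw hwK, hKB w hw hwK]
      constructor
      · intro h
        exact ⟨by norm_num, by linarith [hp1 w], by linarith [hp2 w], le_refl _⟩
      · rintro - ⟨-, h2 | h2 | ⟨huK2, -⟩⟩
        · exact hu h2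
        · exact hw h2
        · exact huK huK2
    · rw [hCA u hu huK, hDB u hu huK hua, hCA w hw hwK, hCB w hw hwK hwa]
      constructor
      · intro h; norm_num
      · rintro - ⟨-, h2 | h2 | ⟨huK2, -⟩⟩
        · exact hu h2
        · exact hw h2
        · exact huK huK2
    · rw [hCA u hu huK, hDB u hu huK hua, hCA w hw hwK, hDB w hw hwK hwa]
      constructor
      · intro h; norm_num
      · rintro - ⟨-, h2 | h2 | ⟨huK2, -⟩⟩
        · exact hu h2
        · exact hw h2
        · exact huK huK2

lemma dom_of_threshold {V : Type*} [Fintype V] {Γ : SimpleGraph V} (hT : IsThresholdGraph Γ)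
    (x0 : V) : ∃ v : V, ∀ u : V, u ≠ v → (∃ z, Γ.Adj u z) → Γ.Adj v u := by
  classical
  set N : V → Finset V := fun x => Finset.univ.filter (Γ.Adj x) with hN
  set d : V → ℕ := fun x => (N x).card with hd
  have hmemN : ∀ x y : V, y ∈ N x ↔ Γ.Adj x y := by
    intro x y; simp [hN]
  obtain ⟨v, -, hmax'⟩ := Finset.exists_max_image Finset.univ d ⟨x0, Finset.mem_univ _⟩
  have hmax : ∀ x, d x ≤ d v := fun x => hmax' x (Finset.mem_univ _)
  refine ⟨v, ?_⟩
  by_contra hcon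
  push_neg at hcon
  obtain ⟨u, hne, ⟨z, huz⟩, hnadj⟩ := hcon
  -- Step 1: find a common neighbour w of u and v
  have hz_ne_v : z ≠ v := fun h => hnadj (h ▸ huz).symm
  obtain ⟨w, huw, hvw⟩ : ∃ w, Γ.Adj u w ∧ Γ.Adj v w := by
    by_cases hz : Γ.Adj v z
    · exact ⟨z, huz, hz⟩
    · -- v has a neighbour q since d v ≥ d u ≥ 1
      have hdu : 0 < d u := by
        rw [hd]
        exact Finset.card_pos.mpr ⟨z, (hmemN u z).mpr huz⟩
      have hdv : 0 < d v := lt_of_lt_of_le hdu (hmax u)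
      obtain ⟨q, hq⟩ := Finset.card_pos.mp hdv
      have hvq : Γ.Adj v q := (hmemN v q).mp hq
      have hqu : q ≠ u := fun h => hnadj (h ▸ hvq)
      have hqz : q ≠ z := fun h => hz (h ▸ hvq)
      by_cases huq : Γ.Adj u q
      · exact ⟨q, huq, hvq⟩
      · by_cases hzq : Γ.Adj z q
        · -- P4 : u - z - q - v
          exact absurd ⟨u, z, q, v, huz.ne, hqu.symm, hne, hzq.ne, hz_ne_v, hvq.ne',
            huz, hzq, hvq.symm, huq, fun h => hnadj h.symm, fun h => hz h.symm⟩ hT.2.1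
        · -- 2K2 : uz and vq
          exact absurd ⟨u, z, v, q, huz.ne, hne, hqu.symm, hz_ne_v, hqz.symm, hvq.ne,
            huz, hvq, fun h => hnadj h.symm, huq, fun h => hz h.symm, hzq⟩ hT.1
  -- Step 2: N v ⊆ N w ∪ {w}, plus u, v ∈ N w, contradiction with maximality
  have hNsub : ∀ x, Γ.Adj v x → x = w ∨ Γ.Adj w x := by
    intro x hvx
    by_contra hx
    push_neg at hx
    obtain ⟨hxw, hwx⟩ := hx
    have hxu : x ≠ u := fun h => hnadj (h ▸ hvx)
    have hxv : x ≠ v := hvx.ne'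
    by_cases hux : Γ.Adj u x
    · -- C4 : u - w - v - x - u
      exact hT.2.2 ⟨u, w, v, x, huw.ne, hne, hux.ne, hvw.ne', fun h => hxw h.symm, hxv.symm,
        huw, hvw.symm, hvx, hux.symm, fun h => hnadj h.symm, hwx⟩
    · -- P4 : u - w - v - x
      exact hT.2.1 ⟨u, w, v, x, huw.ne, hne, hxu.symm, hvw.ne', fun h => hxw h.symm, hxv.symm,
        huw, hvw.symm, hvx, fun h => hnadj h.symm, hux, hwx⟩
  have hwv : w ∈ N v := (hmemN v w).mpr hvw
  have hsub : insert u (insert v ((N v).erase w)) ⊆ N w := by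
    intro x hx
    rcases Finset.mem_insert.mp hx with rfl | hx
    · exact (hmemN w x).mpr huw.symm
    rcases Finset.mem_insert.mp hx with rfl | hx
    · exact (hmemN w x).mpr hvw.symm
    · have h1 : x ≠ w := Finset.ne_of_mem_erase hx
      have h2 : Γ.Adj v x := (hmemN v x).mp (Finset.mem_of_mem_erase hx)
      rcases hNsub x h2 with h | h
      · exact absurd h h1
      · exact (hmemN w x).mpr h
  have hucard : u ∉ insert v ((N v).erase w) := by
    intro h
    rcases Finset.mem_insert.mp h with h | h
    · exact hne h
    · exact hnadj ((hmemN v u).mp (Finset.mem_of_mem_erase h))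
  have hvcard : v ∉ (N v).erase w := by
    intro h
    exact Γ.irrefl ((hmemN v v).mp (Finset.mem_of_mem_erase h))
  have hcard1 : (insert u (insert v ((N v).erase w))).card = (d v - 1) + 2 := by
    rw [Finset.card_insert_of_notMem hucard, Finset.card_insert_of_notMem hvcard,
      Finset.card_erase_of_mem hwv]
  have hdv1 : 1 ≤ d v := by
    rw [hd]; exact Finset.card_pos.mpr ⟨w, hwv⟩
  have hle := Finset.card_le_card hsub
  rw [hcard1] at hle
  have hdw : (N w).card = d w := rfl
  rw [hdw] at hle
  have := hmax w
  omega

/-! ### Replacing a threshold subgraph by a co-interval one -/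

lemma threshold_cover_replace {V : Type*} [Fintype V] {G Γ : SimpleGraph V} (hG : IsBlockGraph G)
    (hle : Γ ≤ G) (hT : IsThresholdGraph Γ) (x0 : V) :
    ∃ g : SimpleGraph V, g ≤ G ∧ IsCoIntervalGraph g ∧ ∀ u w, Γ.Adj u w → g.Adj u w := by
  classical
  obtain ⟨v, hdom⟩ := dom_of_threshold hT x0
  set K : Set V := insert v {x | x ≠ v ∧ ∃ y, y ≠ v ∧ Γ.Adj x y} with hKdef
  have hvK : v ∈ K := Set.mem_insert _ _
  have hmemK : ∀ x, x ∈ K ↔ x = v ∨ (x ≠ v ∧ ∃ y, y ≠ v ∧ Γ.Adj x y) := by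
    intro x; simp [hKdef]
  have hclique : G.IsClique K := by
    intro x hx y hy hne
    rcases (hmemK x).mp hx with hxv | ⟨hxv, a', hav, hxa⟩
    · subst hxv
      rcases (hmemK y).mp hy with hyv | ⟨hyv, b', hbv, hyb⟩
      · exact absurd hyv.symm hne
      · exact hle (hdom y hyv ⟨b', hyb⟩)
    · rcases (hmemK y).mp hy with hyv | ⟨hyv, b', hbv, hyb⟩
      · subst hyv
        exact (hle (hdom x hxv ⟨a', hxa⟩)).symm
      · have hvx : Γ.Adj v x := hdom x hxv ⟨a', hxa⟩
        have hvy : Γ.Adj v y := hdom y hyv ⟨b', hyb⟩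
        by_cases hay : a' = y
        · exact hle (hay ▸ hxa)
        by_cases hbx : b' = x
        · exact (hle (hbx ▸ hyb)).symm
        by_cases hab : a' = b'
        · have hay2 : G.Adj a' y := by rw [hab]; exact (hle hyb).symm
          have h4 := clique_of_cycle4 hG (hle hxa) hay2 (hle hvy).symm (hle hvx) hne hav
          exact h4 (by simp) (by simp) hne
        · have h2k2 : Γ.Adj x y ∨ Γ.Adj x b' ∨ Γ.Adj a' y ∨ Γ.Adj a' b' := by
            by_contra hc
            push_neg at hc
            exact hT.1 ⟨x, a', y, b', hxa.ne, hne, fun h => hbx h.symm, hay, hab, hyb.ne,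
              hxa, hyb, hc.1, hc.2.1, hc.2.2.1, hc.2.2.2⟩
          rcases h2k2 with h | h | h | h
          · exact hle h
          · have h4 := clique_of_cycle4 hG (hle h) (hle hyb).symm (hle hvy).symm (hle hvx)
                hne hbv
            exact h4 (by simp) (by simp) hne
          · have h4 := clique_of_cycle4 hG (hle hxa) (hle h) (hle hvy).symm (hle hvx) hne hav
            exact h4 (by simp) (by simp) hne
          · have h5 := clique_of_cycle5 hG (hle hxa) (hle h) (hle hyb).symm (hle hvy).symm
                (hle hvx) (fun hh => hbx hh.symm) hne hay hav hbv
            exact h5 (by simp) (by simp) hne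
  refine ⟨shapeGraph G v K, shapeGraph_le G v K, shapeGraph_cointerval G hclique hvK, ?_⟩
  intro u w huw
  refine ⟨hle huw, ?_⟩
  by_cases hu : u = v
  · exact Or.inl hu
  by_cases hw : w = v
  · exact Or.inr (Or.inl hw)
  · exact Or.inr (Or.inr ⟨(hmemK u).mpr (Or.inr ⟨hu, w, hw, huw⟩),
      (hmemK w).mpr (Or.inr ⟨hw, u, hu, huw.symm⟩)⟩)

/-! ### Replacing a co-interval subgraph by two threshold ones -/

lemma adj_iff_sep {V : Type*} {H : SimpleGraph V} {a b : V → ℝ} (hab : ∀ v, a v ≤ b v)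
    (hiff : ∀ u v : V, u ≠ v →
      (Hᶜ.Adj u v ↔ (Set.Icc (a u) (b u) ∩ Set.Icc (a v) (b v)).Nonempty))
    {u w : V} (hne : u ≠ w) : H.Adj u w ↔ (b u < a w ∨ b w < a u) := by
  have h1 := hiff u w hne
  rw [SimpleGraph.compl_adj, icc_nonempty_iff] at h1
  constructor
  · intro h
    by_contra h3
    push_neg at h3
    exact (h1.mpr ⟨hab u, h3.2, h3.1, hab w⟩).2 h
  · intro h
    by_contra hA
    have h4 := h1.mp ⟨hne, hA⟩
    rcases h with h | h
    · linarith [h4.2.2.1]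
    · linarith [h4.2.1]

lemma bot_threshold {V : Type*} : IsThresholdGraph (⊥ : SimpleGraph V) := by
  refine ⟨?_, ?_, ?_⟩ <;> rintro ⟨a, b, c, d, -, -, -, -, -, -, h, -⟩ <;> simpa using h

lemma cointerval_cover_replace {V : Type*} [Fintype V] {G H : SimpleGraph V}
    (hG : IsBlockGraph G) (hle : H ≤ G) (hC : IsCoIntervalGraph H) (x0 : V) :
    ∃ g1 g2 : SimpleGraph V, g1 ≤ G ∧ IsThresholdGraph g1 ∧ g2 ≤ G ∧ IsThresholdGraph g2 ∧
      ∀ u w, H.Adj u w → g1.Adj u w ∨ g2.Adj u w := by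
  classical
  by_cases hE : ∃ p q : V, H.Adj p q
  swap
  · refine ⟨⊥, ⊥, bot_le, bot_threshold, bot_le, bot_threshold, ?_⟩
    intro u w huw
    exact absurd ⟨u, w, huw⟩ hE
  obtain ⟨p0, q0, hpq0⟩ := hE
  obtain ⟨a, b, hab, hiff⟩ := hC
  have hsep : ∀ u w : V, u ≠ w → (H.Adj u w ↔ (b u < a w ∨ b w < a u)) :=
    fun u w hne => adj_iff_sep hab hiff hne
  set S : Finset V := Finset.univ.filter (fun x => ∃ y, H.Adj x y) with hS
  have hSmem : ∀ x, x ∈ S ↔ ∃ y, H.Adj x y := by intro x; simp [hS]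
  have hSne : S.Nonempty := ⟨p0, (hSmem p0).mpr ⟨q0, hpq0⟩⟩
  obtain ⟨v1, hv1S, hamax⟩ := Finset.exists_max_image S a hSne
  obtain ⟨v2, hv2S, hbmin⟩ := Finset.exists_min_image S b hSne
  have hkey : b v2 < a v1 := by
    have hp0 : p0 ∈ S := (hSmem p0).mpr ⟨q0, hpq0⟩
    have hq0 : q0 ∈ S := (hSmem q0).mpr ⟨p0, hpq0.symm⟩
    rcases (hsep p0 q0 hpq0.ne).mp hpq0 with h | h
    · calc b v2 ≤ b p0 := hbmin p0 hp0
        _ < a q0 := h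
        _ ≤ a v1 := hamax q0 hq0
    · calc b v2 ≤ b q0 := hbmin q0 hq0
        _ < a p0 := h
        _ ≤ a v1 := hamax p0 hp0
  have hv12 : v1 ≠ v2 := by
    intro h
    rw [h] at hkey
    exact absurd (hab v2) (by linarith)
  have h12 : H.Adj v1 v2 := (hsep v1 v2 hv12).mpr (Or.inr hkey)
  set K : Set V := insert v1 (insert v2 {x | G.Adj v1 x ∧ G.Adj v2 x}) with hKdef
  have hv1K : v1 ∈ K := Set.mem_insert _ _
  have hv2K : v2 ∈ K := Set.mem_insert_of_mem _ (Set.mem_insert _ _)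
  have hmemK : ∀ x, x ∈ K ↔ x = v1 ∨ x = v2 ∨ (G.Adj v1 x ∧ G.Adj v2 x) := by
    intro x; simp [hKdef]
  have hclique : G.IsClique K := by
    intro x hx y hy hne
    rcases (hmemK x).mp hx with h1 | h1 | h1 <;> rcases (hmemK y).mp hy with h2 | h2 | h2
    · exact absurd (h1.trans h2.symm) hne
    · rw [h1, h2]; exact hle h12
    · rw [h1]; exact h2.1
    · rw [h1, h2]; exact (hle h12).symm
    · exact absurd (h1.trans h2.symm) hne
    · rw [h1]; exact h2.2
    · rw [h2]; exact h1.1.symm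
    · rw [h2]; exact h1.2.symm
    · have h4 := clique_of_cycle4 hG h1.1.symm h2.1 h2.2.symm h1.2 hne (hle h12).ne
      exact h4 (by simp) (by simp) hne
  have claim : ∀ p q : V, H.Adj p q → b p < a q →
      (shapeGraph G v1 K).Adj p q ∨ (shapeGraph G v2 K).Adj p q := by
    intro p q hpq hsepb
    by_cases hp1 : p = v1
    · exact Or.inl ⟨hle hpq, Or.inl hp1⟩
    by_cases hp2 : p = v2
    · exact Or.inr ⟨hle hpq, Or.inl hp2⟩
    by_cases hq1 : q = v1
    · exact Or.inl ⟨hle hpq, Or.inr (Or.inl hq1)⟩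
    by_cases hq2 : q = v2
    · exact Or.inr ⟨hle hpq, Or.inr (Or.inl hq2)⟩
    · have hpS : p ∈ S := (hSmem p).mpr ⟨q, hpq⟩
      have hqS : q ∈ S := (hSmem q).mpr ⟨p, hpq.symm⟩
      have hpv1 : H.Adj p v1 :=
        (hsep p v1 hp1).mpr (Or.inl (lt_of_lt_of_le hsepb (hamax q hqS)))
      have hv2q : H.Adj v2 q := by
        refine (hsep v2 q (fun h => hq2 h.symm)).mpr (Or.inl ?_)
        calc b v2 ≤ b p := hbmin p hpS
          _ < a q := hsepb
      have h4 := clique_of_cycle4 hG (hle hpq) (hle hv2q).symm (hle h12).symm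
        (hle hpv1).symm hp2 hq1
      have hv2p : G.Adj v2 p := ((h4 (by simp) (by simp) hp2 : G.Adj p v2)).symm
      have hv1q : G.Adj v1 q := ((h4 (by simp) (by simp) hq1 : G.Adj q v1)).symm
      have hKp : p ∈ K := (hmemK p).mpr (Or.inr (Or.inr ⟨(hle hpv1).symm, hv2p⟩))
      have hKq : q ∈ K := (hmemK q).mpr (Or.inr (Or.inr ⟨hv1q, hle hv2q⟩))
      exact Or.inl ⟨hle hpq, Or.inr (Or.inr ⟨hKp, hKq⟩)⟩
  refine ⟨shapeGraph G v1 K, shapeGraph G v2 K, shapeGraph_le _ _ _,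
    shapeGraph_threshold G hclique hv1K, shapeGraph_le _ _ _,
    shapeGraph_threshold G hclique hv2K, ?_⟩
  intro u w huw
  rcases (hsep u w huw.ne).mp huw with h | h
  · exact claim u w huw h
  · rcases claim w u huw.symm h with h1 | h1
    · exact Or.inl h1.symm
    · exact Or.inr h1.symm

/-! ### Single-edge graphs -/

lemma singleEdge_props {V : Type*} [Fintype V] (G : SimpleGraph V) (E : Sym2 V)
    (hE : E ∈ G.edgeSet) :
    SimpleGraph.fromEdgeSet {E} ≤ G ∧ IsThresholdGraph (SimpleGraph.fromEdgeSet {E}) ∧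
      IsCoIntervalGraph (SimpleGraph.fromEdgeSet {E}) := by
  classical
  induction E using Sym2.ind with
  | _ x y =>
  rw [SimpleGraph.mem_edgeSet] at hE
  have hxy : x ≠ y := hE.ne
  have hadj : ∀ u w : V, (SimpleGraph.fromEdgeSet {s(x, y)}).Adj u w ↔
      ((u = x ∧ w = y) ∨ (u = y ∧ w = x)) := by
    intro u w
    rw [SimpleGraph.fromEdgeSet_adj]
    constructor
    · rintro ⟨h1, -⟩
      rw [Set.mem_singleton_iff, Sym2.eq_iff] at h1
      exact h1
    · rintro (⟨rfl, rfl⟩ | ⟨rfl, rfl⟩)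
      · exact ⟨rfl, hxy⟩
      · exact ⟨by rw [Set.mem_singleton_iff, Sym2.eq_swap], hxy.symm⟩
  refine ⟨?_, ⟨?_, ?_, ?_⟩, ?_⟩
  · intro u w h
    rcases (hadj u w).mp h with ⟨rfl, rfl⟩ | ⟨rfl, rfl⟩
    · exact hE
    · exact hE.symm
  · rintro ⟨a', b', c', d', h1, h2, h3, h4, h5, h6, e1, e2, -⟩
    rcases (hadj _ _).mp e1 with ⟨hA1, hB1⟩ | ⟨hA1, hB1⟩ <;>
      rcases (hadj _ _).mp e2 with ⟨hA2, hB2⟩ | ⟨hA2, hB2⟩ <;> simp_all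
  · rintro ⟨a', b', c', d', h1, h2, h3, h4, h5, h6, e1, e2, -⟩
    rcases (hadj _ _).mp e1 with ⟨hA1, hB1⟩ | ⟨hA1, hB1⟩ <;>
      rcases (hadj _ _).mp e2 with ⟨hA2, hB2⟩ | ⟨hA2, hB2⟩ <;> simp_all
  · rintro ⟨a', b', c', d', h1, h2, h3, h4, h5, h6, e1, e2, -⟩
    rcases (hadj _ _).mp e1 with ⟨hA1, hB1⟩ | ⟨hA1, hB1⟩ <;>
      rcases (hadj _ _).mp e2 with ⟨hA2, hB2⟩ | ⟨hA2, hB2⟩ <;> simp_all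
  · refine ⟨fun w => if w = y then 1 else 0, fun w => if w = x then 0 else 1, ?_, ?_⟩
    · intro w
      by_cases h1 : w = y <;> by_cases h2 : w = x <;>
        simp [h1, h2] <;> simp_all <;> norm_num
    · intro u w hne
      rw [SimpleGraph.compl_adj]
      simp only [ne_eq, hne, not_false_iff, true_and]
      rw [hadj, icc_nonempty_iff]
      by_cases hux : u = x <;> by_cases huy : u = y <;> by_cases hwx : w = x <;>
        by_cases hwy : w = y <;> simp_all

lemma exists_edge_cover {V : Type*} [Fintype V] (G : SimpleGraph V) :
    ∃ (k : ℕ) (f : Fin k → SimpleGraph V),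
      (∀ i, f i ≤ G ∧ IsThresholdGraph (f i) ∧ IsCoIntervalGraph (f i)) ∧
      ∀ u v : V, G.Adj u v → ∃ i, (f i).Adj u v := by
  classical
  refine ⟨G.edgeFinset.card,
    fun i => SimpleGraph.fromEdgeSet {(G.edgeFinset.equivFin.symm i : Sym2 V)}, ?_, ?_⟩
  · intro i
    refine singleEdge_props G _ ?_
    have := (G.edgeFinset.equivFin.symm i).2
    rwa [SimpleGraph.mem_edgeFinset] at this
  · intro u v huv
    have hmem : s(u, v) ∈ G.edgeFinset := by
      rw [SimpleGraph.mem_edgeFinset, SimpleGraph.mem_edgeSet]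
      exact huv
    refine ⟨G.edgeFinset.equivFin ⟨s(u, v), hmem⟩, ?_⟩
    rw [SimpleGraph.fromEdgeSet_adj]
    refine ⟨?_, huv.ne⟩
    rw [Equiv.symm_apply_apply]
    rfl

end Aux

/-- For every block graph `G`, `coboxicity G ≤ cothdim G ≤ 2 * coboxicity G`. -/
theorem coboxicity_le_cothdim_le_two_mul {V : Type*} [Fintype V]
    (G : SimpleGraph V) (hG : IsBlockGraph G) :
    coboxicity G ≤ cothdim G ∧ cothdim G ≤ 2 * coboxicity G := by
  classical
  by_cases hV : Nonempty V
  swap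
  · have h0 : ∀ (P : SimpleGraph V → Prop), (0 : ℕ) ∈ {k : ℕ | ∃ f : Fin k → SimpleGraph V,
        (∀ i, f i ≤ G ∧ P (f i)) ∧ ∀ u v : V, G.Adj u v → ∃ i, (f i).Adj u v} := by
      intro P
      exact ⟨fun i => i.elim0, fun i => i.elim0, fun u v h => absurd ⟨u⟩ hV⟩
    have hco : coboxicity G = 0 := Nat.sInf_eq_zero.mpr (Or.inl (h0 _))
    have hth : cothdim G = 0 := Nat.sInf_eq_zero.mpr (Or.inl (h0 _))
    rw [hco, hth]
    exact ⟨le_refl _, by norm_num⟩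
  obtain ⟨x0⟩ := hV
  obtain ⟨m, f0, hf0, hcov0⟩ := exists_edge_cover G
  constructor
  · -- coboxicity G ≤ cothdim G
    unfold coboxicity cothdim
    have hne : {k : ℕ | ∃ f : Fin k → SimpleGraph V,
        (∀ i, f i ≤ G ∧ IsThresholdGraph (f i)) ∧
        ∀ u v : V, G.Adj u v → ∃ i, (f i).Adj u v}.Nonempty :=
      ⟨m, f0, fun i => ⟨(hf0 i).1, (hf0 i).2.1⟩, hcov0⟩
    obtain ⟨f, hf, hcov⟩ := Nat.sInf_mem hne
    have hrep := fun i => threshold_cover_replace hG (hf i).1 (hf i).2 x0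
    choose g hgle hgco hgcov using hrep
    exact Nat.sInf_le ⟨g, fun i => ⟨hgle i, hgco i⟩,
      fun u v huv => (hcov u v huv).elim fun i hi => ⟨i, hgcov i u v hi⟩⟩
  · -- cothdim G ≤ 2 * coboxicity G
    unfold coboxicity cothdim
    have hne : {k : ℕ | ∃ f : Fin k → SimpleGraph V,
        (∀ i, f i ≤ G ∧ IsCoIntervalGraph (f i)) ∧
        ∀ u v : V, G.Adj u v → ∃ i, (f i).Adj u v}.Nonempty :=
      ⟨m, f0, fun i => ⟨(hf0 i).1, (hf0 i).2.2⟩, hcov0⟩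
    obtain ⟨f, hf, hcov⟩ := Nat.sInf_mem hne
    have hrep := fun i => cointerval_cover_replace hG (hf i).1 (hf i).2 x0
    choose g1 g2 hle1 hth1 hle2 hth2 hgcov using hrep
    refine Nat.sInf_le ⟨fun j =>
      if (finProdFinEquiv.symm j).1 = 0 then g1 (finProdFinEquiv.symm j).2
        else g2 (finProdFinEquiv.symm j).2, ?_, ?_⟩
    · intro j
      dsimp only
      split
      · exact ⟨hle1 _, hth1 _⟩
      · exact ⟨hle2 _, hth2 _⟩
    · intro u w huw
      obtain ⟨i, hi⟩ := hcov u w huw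
      rcases hgcov i u w hi with h | h
      · refine ⟨finProdFinEquiv ((0 : Fin 2), i), ?_⟩
        simpa [Equiv.symm_apply_apply] using h
      · refine ⟨finProdFinEquiv ((1 : Fin 2), i), ?_⟩
        simpa [Equiv.symm_apply_apply] using h
end
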